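/- Let n ≥ 1 be an integer, s ∈ (0,1), and Σ ⊆ ℝ^{n+1} a set with locally finite ℋⁿ-measure. Assume that ℋⁿ(Σ ∩ B_ρ(x₀)) ≥ c⋆ ρⁿ for all x₀ ∈ Σ and all ρ > 0, for some constant c⋆ > 0. Then there exists a constant C > 0 depending only on n, s, and c⋆, such that ℋⁿ(A)^{(n−s)/n} ≤ C · Per_{Σ,s}(A) for every ℋⁿ-measurable set A ⊆ Σ with ℋⁿ(A) < ∞, where Per_{Σ,s}(A) = ∫_A ∫_{Σ∖A} |x−y|^{−(n+s)} dℋⁿ(x) dℋⁿ(y) is the s-perimeter of A on Σ. -/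

import Mathlib

/-!
Choose `ρ` with `c⋆ ρⁿ = 2 ℋⁿ(A)`. For `x ∈ A` the density bound puts mass at least `2 ℋⁿ(A)`
of `Σ` in `B_ρ(x)`, so at least `ℋⁿ(A)` of it lies in `Σ ∖ A`, where the kernel is at least
`ρ^{-(n+s)}`. Integrating over `A` gives `Per_{Σ,s}(A) ≥ ℋⁿ(A)² ρ^{-(n+s)}`, which is a constant
multiple of `ℋⁿ(A)^{(n-s)/n}`.
-/

open MeasureTheory Metric Set
open scoped ENNReal NNReal

noncomputable section

/-- The `s`-perimeter of `A` on `S`: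
`Per_{S,s}(A) = ∫_A ∫_{S∖A} |x-y|^{-(n+s)} dℋⁿ(x) dℋⁿ(y)`. -/
def fracPerimeterOn (n : ℕ) (s : ℝ) (S A : Set (EuclideanSpace ℝ (Fin (n + 1)))) : ℝ≥0∞ :=
  ∫⁻ x in A, ∫⁻ y in S \ A,
    ENNReal.ofReal (‖x - y‖ ^ (-((n : ℝ) + s))) ∂μH[(n : ℝ)] ∂μH[(n : ℝ)]

theorem measure_le_measure_sdiff_of_two_mul_le {α : Type*} [MeasurableSpace α]
    {μ : Measure α} {A T : Set α} (hA : μ A ≠ ∞) (h : 2 * μ A ≤ μ T) :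
    μ A ≤ μ (T \ A) :=
  calc μ A ≤ μ T - μ A := ENNReal.le_sub_of_add_le_right hA (by rwa [← two_mul])
    _ ≤ μ (T \ A) := le_measure_sdiff

section Kernel

variable {E : Type*} [NormedAddCommGroup E] [MeasurableSpace E] [OpensMeasurableSpace E]
  {μ : Measure E} {α ρ : ℝ}

-- `x ∉ T` is needed since `(0 : ℝ) ^ (-α) = 0` for `α ≠ 0`.
theorem ofReal_rpow_neg_mul_measure_inter_ball_le_lintegral (hα : 0 ≤ α) {x : E}
    {T : Set E} (hx : x ∉ T) :
    ENNReal.ofReal (ρ ^ (-α)) * μ (T ∩ ball x ρ)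
      ≤ ∫⁻ y in T, ENNReal.ofReal (‖x - y‖ ^ (-α)) ∂μ := by
  have hkernel : ∀ y ∈ T ∩ ball x ρ, ENNReal.ofReal (ρ ^ (-α))
      ≤ ENNReal.ofReal (‖x - y‖ ^ (-α)) := by
    rintro y ⟨hyT, hyρ⟩
    have hxy : 0 < ‖x - y‖ := norm_pos_iff.2 (sub_ne_zero.2 fun h ↦ hx (h ▸ hyT))
    rw [mem_ball, dist_eq_norm, ← norm_neg, neg_sub] at hyρ
    exact ENNReal.ofReal_le_ofReal
      (Real.rpow_le_rpow_of_nonpos hxy hyρ.le (neg_nonpos.2 hα))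
  calc ENNReal.ofReal (ρ ^ (-α)) * μ (T ∩ ball x ρ)
      = ∫⁻ _ in T ∩ ball x ρ, ENNReal.ofReal (ρ ^ (-α)) ∂μ := (setLIntegral_const _ _).symm
    _ ≤ ∫⁻ y in T ∩ ball x ρ, ENNReal.ofReal (‖x - y‖ ^ (-α)) ∂μ :=
        setLIntegral_mono
          ((continuous_const.sub continuous_id).norm.measurable.pow_const _).ennreal_ofReal hkernel
    _ ≤ ∫⁻ y in T, ENNReal.ofReal (‖x - y‖ ^ (-α)) ∂μ := lintegral_mono_set inter_subset_left

variable {S A : Set E}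

theorem measure_mul_ofReal_rpow_neg_le_lintegral_sdiff (hα : 0 ≤ α) (hA : μ A ≠ ∞)
    {x : E} (hx : x ∈ A) (hball : 2 * μ A ≤ μ (S ∩ ball x ρ)) :
    μ A * ENNReal.ofReal (ρ ^ (-α))
      ≤ ∫⁻ y in S \ A, ENNReal.ofReal (‖x - y‖ ^ (-α)) ∂μ := by
  have hmass : μ A ≤ μ ((S \ A) ∩ ball x ρ) := by
    rw [← inter_sdiff_right_comm]
    exact measure_le_measure_sdiff_of_two_mul_le hA hball
  calc μ A * ENNReal.ofReal (ρ ^ (-α))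
      ≤ ENNReal.ofReal (ρ ^ (-α)) * μ ((S \ A) ∩ ball x ρ) := by
        rw [mul_comm]; gcongr
    _ ≤ _ := ofReal_rpow_neg_mul_measure_inter_ball_le_lintegral hα fun h ↦ h.2 hx

theorem measure_mul_ofReal_rpow_neg_mul_measure_le_lintegral_lintegral (hα : 0 ≤ α)
    (hAm : MeasurableSet A) (hA : μ A ≠ ∞) (hball : ∀ x ∈ A, 2 * μ A ≤ μ (S ∩ ball x ρ)) :
    μ A * ENNReal.ofReal (ρ ^ (-α)) * μ A
      ≤ ∫⁻ x in A, ∫⁻ y in S \ A, ENNReal.ofReal (‖x - y‖ ^ (-α)) ∂μ ∂μ := by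
  rw [← setLIntegral_const]
  exact setLIntegral_mono' hAm fun x hx ↦
    measure_mul_ofReal_rpow_neg_le_lintegral_sdiff hα hA hx (hball x hx)

end Kernel

theorem rpow_sub_div_eq_of_mul_pow_eq {n : ℕ} (hn : n ≠ 0) {c m ρ : ℝ} (s : ℝ) (hc : 0 < c)
    (hm : 0 < m) (hρ : 0 < ρ) (h : c * ρ ^ n = 2 * m) :
    m ^ (((n : ℝ) - s) / n) = (2 / c) ^ (((n : ℝ) + s) / n) * (m * ρ ^ (-((n : ℝ) + s)) * m) := by
  have hn0 : (n : ℝ) ≠ 0 := Nat.cast_ne_zero.2 hn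
  set p : ℝ := ((n : ℝ) + s) / n
  have hρn : ρ ^ (n : ℝ) = 2 / c * m := by
    rw [Real.rpow_natCast]; field_simp; linarith
  have hρp : ρ ^ (-((n : ℝ) + s)) = (2 / c) ^ (-p) * m ^ (-p) := by
    rw [← Real.mul_rpow (by positivity) hm.le, ← hρn, ← Real.rpow_mul hρ.le]
    congr 1; simp only [p]; field_simp
  have hsq : m * m ^ (-p) * m = m ^ (((n : ℝ) - s) / n) := by
    rw [show ((n : ℝ) - s) / n = 1 + -p + 1 by simp only [p]; field_simp; ring, Real.rpow_add hm,
      Real.rpow_add hm, Real.rpow_one]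
  have hcancel : (2 / c) ^ p * (2 / c) ^ (-p) = 1 := by
    rw [← Real.rpow_add (by positivity), add_neg_cancel, Real.rpow_zero]
  rw [hρp, ← hsq]
  linear_combination (-(m * m ^ (-p) * m)) * hcancel

/-- Fractional isoperimetric inequality on sets satisfying a global density lower
bound (Corollary 5.6). -/
theorem fractional_isoperimetric (n : ℕ) (hn : 1 ≤ n) (s : ℝ) (hs : s ∈ Ioo (0 : ℝ) 1)
    (cstar : ℝ) (hcstar : 0 < cstar) :
    ∃ C : ℝ, 0 < C ∧
      ∀ S : Set (EuclideanSpace ℝ (Fin (n + 1))),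
        (∀ x : EuclideanSpace ℝ (Fin (n + 1)), ∃ ε > 0, μH[(n : ℝ)] (S ∩ ball x ε) ≠ ⊤) →
        (∀ x₀ ∈ S, ∀ ρ : ℝ, 0 < ρ →
          ENNReal.ofReal (cstar * ρ ^ n) ≤ μH[(n : ℝ)] (S ∩ ball x₀ ρ)) →
        ∀ A : Set (EuclideanSpace ℝ (Fin (n + 1))),
          A ⊆ S → MeasurableSet A → μH[(n : ℝ)] A ≠ ⊤ →
          (μH[(n : ℝ)] A) ^ (((n : ℝ) - s) / n)
            ≤ ENNReal.ofReal C * fracPerimeterOn n s S A := by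
  obtain ⟨hs0, hs1⟩ := hs
  have hn1 : (1 : ℝ) ≤ n := by exact_mod_cast hn
  have hn0 : (0 : ℝ) < n := by linarith
  refine ⟨(2 / cstar) ^ (((n : ℝ) + s) / n), by positivity, ?_⟩
  intro S _ hdens A hAS hAm hAfin
  rcases eq_or_ne (μH[(n : ℝ)] A) 0 with hA0 | hA0
  · rw [hA0, ENNReal.zero_rpow_of_pos (div_pos (by linarith) hn0)]
    exact zero_le
  set m := (μH[(n : ℝ)] A).toReal
  have hm : 0 < m := ENNReal.toReal_pos hA0 hAfin
  set ρ := (2 * m / cstar) ^ ((1 : ℝ) / n)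
  have hρ : 0 < ρ := by positivity
  have hρn : cstar * ρ ^ n = 2 * m := by
    rw [← Real.rpow_natCast, ← Real.rpow_mul (by positivity), one_div_mul_cancel hn0.ne',
      Real.rpow_one]
    field_simp
  have hball : ∀ x ∈ A, 2 * μH[(n : ℝ)] A ≤ μH[(n : ℝ)] (S ∩ ball x ρ) := fun x hx ↦ by
    simpa [hρn, m, ENNReal.ofReal_mul, ENNReal.ofReal_toReal hAfin] using hdens x (hAS hx) ρ hρ
  have hPer := measure_mul_ofReal_rpow_neg_mul_measure_le_lintegral_lintegral
    (α := n + s) (by positivity) hAm hAfin hball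
  rw [← ENNReal.ofReal_toReal hAfin, ENNReal.ofReal_rpow_of_pos hm,
    rpow_sub_div_eq_of_mul_pow_eq (by omega) s hcstar hm hρ hρn]
  refine le_trans (le_of_eq ?_) (mul_le_mul_right hPer _)
  rw [ENNReal.ofReal_mul (by positivity), ENNReal.ofReal_mul (by positivity),
    ENNReal.ofReal_mul hm.le, ENNReal.ofReal_toReal hAfin]
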